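/- arXiv:1804.09068 — 2 statements merged into one kernel-verified Lean document; each statement's English description precedes it below -/
import Mathlib

section
/- For the preprojective algebra ΠA_2, the Ext groups between the simple modules satisfy: Ext^n(S_1, S_1) is 1-dimensional when n is even and 0 when n is odd, and Ext^n(S_1, S_2) is 1-dimensional when n is odd and 0 when n is even. -/
/-!
Right multiplication by the arrows splices the indecomposable projectives `P₁ = ΠA₂ e₁` and
`P₂ = ΠA₂ e₂` into a 2-periodic resolution `⋯ → P₁ →·b P₂ →·a P₁ → S₁`: on `P₁ = k e₁ ⊕ k a` the
kernel of `·b` (and of the augmentation) is `k a`, the image of `·a`, and symmetrically on `P₂`.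
Since `a` and `b` act by zero on a simple module `S`, every differential of `Hom(P•, S)` vanishes,
so `Extⁿ(S₁, S) ≅ Hom(Pᵢ, S) ≅ eᵢ S` with `i = 1` for even and `i = 2` for odd `n`.
-/

/-- A presentation of the preprojective algebra `ΠA₂` of the `A₂` quiver: a
4-dimensional `k`-algebra with basis the orthogonal vertex idempotents `e₁, e₂`
(summing to `1`) and the two arrows `a = e₂ a e₁`, `b = e₁ b e₂`, subject to the
preprojective relations `a b = 0 = b a`. -/
structure PiA2Data (k A : Type) [Field k] [Ring A] [Algebra k A] : Type where
  e1 : A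
  e2 : A
  a : A
  b : A
  he1 : e1 * e1 = e1
  he2 : e2 * e2 = e2
  h12 : e1 * e2 = 0
  h21 : e2 * e1 = 0
  hsum : e1 + e2 = 1
  ha : e2 * a * e1 = a
  hb : e1 * b * e2 = b
  hab : a * b = 0
  hba : b * a = 0
  basis : Module.Basis (Fin 4) k A
  hbasis : ⇑basis = ![e1, e2, a, b]

variable {k A : Type} [Field k] [Ring A] [Algebra k A] (D : PiA2Data k A)

/-- The indecomposable projective left module `P₁ = (ΠA₂)e₁`, as a left ideal. -/
def P1 : Submodule A A := Submodule.span A {D.e1}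

/-- The indecomposable projective left module `P₂ = (ΠA₂)e₂`, as a left ideal. -/
def P2 : Submodule A A := Submodule.span A {D.e2}

open CategoryTheory

section Idempotent

variable {R : Type*} [Ring R] {e : R}

namespace IsIdempotentElem

theorem mul_eq_self_of_mem_span_singleton (he : IsIdempotentElem e) {x : R}
    (hx : x ∈ Submodule.span R {e}) : x * e = x := by
  obtain ⟨r, rfl⟩ := Submodule.mem_span_singleton.mp hx
  rw [smul_eq_mul, mul_assoc, he.eq]

theorem apply_eq_smul_apply_self (he : IsIdempotentElem e) {M : Type*} [AddCommGroup M]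
    [Module R M] (g : Submodule.span R {e} →ₗ[R] M) (x : Submodule.span R {e}) :
    g x = (x : R) • g ⟨e, Submodule.mem_span_singleton_self e⟩ := by
  rw [← map_smul]
  congr 1
  exact Subtype.ext (he.mul_eq_self_of_mem_span_singleton x.2).symm

theorem projective_span_singleton (he : IsIdempotentElem e) :
    Module.Projective R (Submodule.span R {e}) :=
  .of_split (Submodule.subtype _)
    ((LinearMap.toSpanSingleton R R e).codRestrict _
      fun x => Submodule.smul_mem _ x (Submodule.mem_span_singleton_self e))
    (LinearMap.ext fun x => Subtype.ext (he.mul_eq_self_of_mem_span_singleton x.2))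

theorem subsingleton_hom_span_singleton (he : IsIdempotentElem e) {Y : ModuleCat R}
    (hY : ∀ y : Y, e • y = 0) :
    Subsingleton (ModuleCat.of R (Submodule.span R {e}) ⟶ Y) := by
  have hzero (f : ModuleCat.of R (Submodule.span R {e}) ⟶ Y) : f = 0 := by
    ext x
    rw [he.apply_eq_smul_apply_self f.hom x, he.apply_eq_smul_apply_self f.hom ⟨e, _⟩, hY,
      smul_zero]
    rfl
  exact ⟨fun f g => (hzero f).trans (hzero g).symm⟩

theorem finrank_hom_span_singleton_eq_one {K : Type*} [Field K] [Algebra K R]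
    (he : IsIdempotentElem e) {Y : ModuleCat R} {y : Y} (hy : y ≠ 0) (hey : e • y = y)
    (hline : ∀ t : Y, e • t = t → ∃ c : K, t = algebraMap K R c • y) :
    Module.finrank K (ModuleCat.of R (Submodule.span R {e}) ⟶ Y) = 1 := by
  let ge : Submodule.span R {e} := ⟨e, Submodule.mem_span_singleton_self e⟩
  refine finrank_eq_one (ModuleCat.ofHom ((LinearMap.toSpanSingleton R Y y).domRestrict _))
    (fun h => hy ?_) fun g => ?_
  · simpa [ge, hey] using congr(($h).hom ge)
  · obtain ⟨c, hc⟩ := hline (g ge) (he.apply_eq_smul_apply_self g.hom ge).symm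
    refine ⟨c, ModuleCat.hom_ext (LinearMap.ext fun x => ?_)⟩
    rw [he.apply_eq_smul_apply_self g.hom x, hc]
    show algebraMap K R c • (x : R) • y = _
    rw [smul_smul, smul_smul, Algebra.commutes]

end IsIdempotentElem

theorem IsSimpleModule.exists_eq_algebraMap_smul {K S : Type*} [CommSemiring K] [Algebra K R]
    [AddCommGroup S] [Module R S] [IsSimpleModule R S] {s : S} (hs : s ≠ 0)
    (hscalar : ∀ u : R, ∃ c : K, u • s = algebraMap K R c • s) (t : S) :
    ∃ c : K, t = algebraMap K R c • s := by
  obtain ⟨u, rfl⟩ := IsSimpleModule.toSpanSingleton_surjective R hs t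
  exact hscalar u

theorem IsSimpleModule.surjective_toSpanSingleton_domRestrict {S : Type*} [AddCommGroup S]
    [Module R S] [IsSimpleModule R S] {s : S} (hs : s ≠ 0) (hes : e • s = s) :
    Function.Surjective ((LinearMap.toSpanSingleton R S s).domRestrict (Submodule.span R {e})) := by
  intro t
  obtain ⟨u, rfl⟩ := IsSimpleModule.toSpanSingleton_surjective R hs t
  refine ⟨⟨u * e, Submodule.mem_span_singleton.mpr ⟨u, rfl⟩⟩, ?_⟩
  simp [mul_smul, hes]

end Idempotent

def Nat.isEven : ℕ → Bool
  | 0 => true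
  | n + 1 => !n.isEven

theorem Nat.isEven_eq_true_iff (n : ℕ) : n.isEven = true ↔ Even n := by
  induction n with
  | zero => simp [Nat.isEven]
  | succ n ih => cases h : n.isEven <;> simp_all [Nat.isEven, Nat.even_add_one]

theorem Nat.isEven_eq_false_iff (n : ℕ) : n.isEven = false ↔ Odd n := by
  rw [← Nat.not_even_iff_odd, ← n.isEven_eq_true_iff, Bool.not_eq_true]

namespace CategoryTheory.ProjectiveResolution

variable {K C : Type*} [Ring K] [Category C] [Abelian C] [Linear K C] [EnoughProjectives C]
  {X : C} (P : ProjectiveResolution X)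

noncomputable def isoExtOfDCompEqZero (Y : C)
    (hY : ∀ (n : ℕ) (g : P.complex.X n ⟶ Y), P.complex.d (n + 1) n ≫ g = 0) (n : ℕ) :
    ((Ext K C n).obj (Opposite.op X)).obj Y ≅ ModuleCat.of K (P.complex.X n ⟶ Y) :=
  have hd (i j : ℕ) : (P.complex.linearYonedaObj K Y).d i j = 0 := by
    by_cases hij : j = i + 1
    · subst hij
      ext g
      exact hY i g
    · rw [HomologicalComplex.shape _ _ _ (by simpa using Ne.symm hij)]
  P.isoExt n Y ≪≫
    (ShortComplex.HomologyData.ofZeros _ (hd _ _) (hd _ _)).left.homologyIso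

end CategoryTheory.ProjectiveResolution

namespace PiA2Data

/-- Exchanging the two vertices; `D.swap.mulA` is right multiplication by `b`. -/
noncomputable def swap : PiA2Data k A where
  e1 := D.e2
  e2 := D.e1
  a := D.b
  b := D.a
  he1 := D.he2
  he2 := D.he1
  h12 := D.h21
  h21 := D.h12
  hsum := by rw [add_comm, D.hsum]
  ha := D.hb
  hb := D.ha
  hab := D.hba
  hba := D.hab
  basis := D.basis.reindex (Equiv.swap 0 1 * Equiv.swap 2 3)
  hbasis := by
    ext i
    rw [Module.Basis.reindex_apply, D.hbasis]
    fin_cases i <;> rfl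

theorem a_mul_e1 : D.a * D.e1 = D.a := by
  rw [← D.ha, mul_assoc, D.he1]

theorem e2_mul_a : D.e2 * D.a = D.a := by
  rw [← D.ha, ← mul_assoc, ← mul_assoc, D.he2]

theorem b_mul_e1 : D.b * D.e1 = 0 := by
  rw [← D.hb, mul_assoc, D.h21, mul_zero]

theorem e1_mul_b : D.e1 * D.b = D.b := D.swap.e2_mul_a

theorem a_ne_zero : D.a ≠ 0 := by
  simpa [D.hbasis] using D.basis.ne_zero 2

theorem exists_eq_linear_combination (u : A) :
    ∃ c₀ c₁ c₂ c₃ : k, u = c₀ • D.e1 + c₁ • D.e2 + c₂ • D.a + c₃ • D.b := by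
  refine ⟨D.basis.repr u 0, D.basis.repr u 1, D.basis.repr u 2, D.basis.repr u 3, ?_⟩
  conv_lhs => rw [← D.basis.sum_repr u]
  simp [Fin.sum_univ_four, D.hbasis]

theorem a_mem_P1 : D.a ∈ P1 D := Submodule.mem_span_singleton.mpr ⟨D.a, D.a_mul_e1⟩

theorem exists_eq_smul_e1_add_smul_a {x : A} (hx : x ∈ P1 D) :
    ∃ c d : k, x = c • D.e1 + d • D.a := by
  obtain ⟨u, rfl⟩ := Submodule.mem_span_singleton.mp hx
  obtain ⟨c₀, c₁, c₂, c₃, rfl⟩ := D.exists_eq_linear_combination u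
  refine ⟨c₀, c₂, ?_⟩
  simp [add_mul, D.he1, D.h21, D.a_mul_e1, D.b_mul_e1]

section Module

variable {M : Type*} [AddCommGroup M] [Module A M]

theorem e2_smul_eq_zero {x : M} (hx : D.e1 • x = x) : D.e2 • x = 0 := by
  have h : D.e1 • x + D.e2 • x = x := by rw [← add_smul, D.hsum, one_smul]
  rwa [hx, add_eq_left] at h

theorem exists_smul_eq_algebraMap_smul {x : M} (h1 : D.e1 • x = x) (ha : D.a • x = 0)
    (hb : D.b • x = 0) (u : A) : ∃ c : k, u • x = algebraMap k A c • x := by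
  obtain ⟨c₀, c₁, c₂, c₃, rfl⟩ := D.exists_eq_linear_combination u
  refine ⟨c₀, ?_⟩
  simp only [add_smul, Algebra.smul_def, mul_smul, h1, D.e2_smul_eq_zero h1, ha, hb,
    smul_zero, add_zero]

end Module

def mulA : P2 D →ₗ[A] P1 D :=
  (LinearMap.toSpanSingleton A A D.a).restrict fun x _ => Submodule.smul_mem _ x D.a_mem_P1

@[simp]
theorem coe_mulA_apply (x : P2 D) : (D.mulA x : A) = x * D.a := rfl

theorem mulA_comp_swap_mulA : D.mulA ∘ₗ D.swap.mulA = 0 :=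
  LinearMap.ext fun x => Subtype.ext <| show x * D.b * D.a = 0 by rw [mul_assoc, D.hba, mul_zero]

theorem swap_mulA_comp_mulA : D.swap.mulA ∘ₗ D.mulA = 0 := D.swap.mulA_comp_swap_mulA

theorem comp_mulA_eq_zero {M : Type*} [AddCommGroup M] [Module A M] (hM : ∀ m : M, D.a • m = 0)
    (g : P1 D →ₗ[A] M) : g ∘ₗ D.mulA = 0 := by
  refine LinearMap.ext fun x => (IsIdempotentElem.apply_eq_smul_apply_self D.he1 g _).trans ?_
  show (x * D.a : A) • _ = 0
  rw [mul_smul, hM, smul_zero]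

theorem mem_range_mulA {x : P1 D} {d : k} (hx : (x : A) = d • D.a) :
    x ∈ LinearMap.range D.mulA :=
  ⟨⟨d • D.e2, Submodule.smul_of_tower_mem _ d (Submodule.mem_span_singleton_self _)⟩,
    Subtype.ext (by rw [coe_mulA_apply, smul_mul_assoc, D.e2_mul_a, hx])⟩

theorem ker_swap_mulA_le_range_mulA : LinearMap.ker D.swap.mulA ≤ LinearMap.range D.mulA := by
  intro x hx
  obtain ⟨c, d, hcd⟩ := D.exists_eq_smul_e1_add_smul_a x.2
  have hcb : c • D.b = 0 := by
    have hxb : (x : A) * D.b = 0 := congr_arg Subtype.val hx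
    rwa [hcd, add_mul, smul_mul_assoc, smul_mul_assoc, D.e1_mul_b, D.hab, smul_zero,
      add_zero] at hxb
  have hc : c = 0 := (smul_eq_zero.mp hcb).resolve_right D.swap.a_ne_zero
  exact D.mem_range_mulA (by rw [hcd, hc, zero_smul, zero_add])

theorem ker_mulA_le_range_swap_mulA : LinearMap.ker D.mulA ≤ LinearMap.range D.swap.mulA :=
  D.swap.ker_swap_mulA_le_range_mulA

/-- `true` stands for vertex 1 and `false` for vertex 2; `Nat.isEven n` is the vertex of the
projective in degree `n` of the periodic resolution. -/
def projAt : Bool → ModuleCat A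
  | true => ModuleCat.of A (P1 D)
  | false => ModuleCat.of A (P2 D)

noncomputable def mulArrow : (s : Bool) → D.projAt (!s) ⟶ D.projAt s
  | true => ModuleCat.ofHom D.mulA
  | false => ModuleCat.ofHom D.swap.mulA

theorem mulArrow_comp_mulArrow (s : Bool) : D.mulArrow (!s) ≫ D.mulArrow s = 0 := by
  cases s
  · exact ModuleCat.hom_ext D.swap_mulA_comp_mulA
  · exact ModuleCat.hom_ext D.mulA_comp_swap_mulA

instance (s : Bool) : Projective (D.projAt s) := by
  cases s
  · have := IsIdempotentElem.projective_span_singleton D.he2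
    exact (IsProjective.iff_projective (P2 D)).mp this
  · have := IsIdempotentElem.projective_span_singleton D.he1
    exact (IsProjective.iff_projective (P1 D)).mp this

theorem mulArrow_comp_eq_zero {Y : ModuleCat A} (ha : ∀ y : Y, D.a • y = 0)
    (hb : ∀ y : Y, D.b • y = 0) (s : Bool) (g : D.projAt s ⟶ Y) : D.mulArrow s ≫ g = 0 := by
  cases s
  · exact ModuleCat.hom_ext (D.swap.comp_mulA_eq_zero hb g.hom)
  · exact ModuleCat.hom_ext (D.comp_mulA_eq_zero ha g.hom)

noncomputable def periodicComplex : ChainComplex (ModuleCat A) ℕ :=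
  ChainComplex.of (fun n => D.projAt n.isEven) (fun n => D.mulArrow n.isEven)
    fun n => D.mulArrow_comp_mulArrow n.isEven

theorem periodicComplex_d (n : ℕ) : D.periodicComplex.d (n + 1) n = D.mulArrow n.isEven :=
  ChainComplex.of_d (fun m : ℕ => D.projAt m.isEven) (fun m : ℕ => D.mulArrow m.isEven) n

theorem periodicComplex_exactAt_succ (n : ℕ) : D.periodicComplex.ExactAt (n + 1) := by
  rw [HomologicalComplex.exactAt_iff' _ (n + 2) (n + 1) n (by simp) (by simp),
    ShortComplex.moduleCat_exact_iff_ker_sub_range]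
  show LinearMap.ker (D.periodicComplex.d (n + 1) n).hom ≤
    LinearMap.range (D.periodicComplex.d (n + 1 + 1) (n + 1)).hom
  rw [periodicComplex_d, periodicComplex_d]
  show LinearMap.ker (D.mulArrow n.isEven).hom ≤ LinearMap.range (D.mulArrow (!n.isEven)).hom
  cases n.isEven
  · exact D.ker_swap_mulA_le_range_mulA
  · exact D.ker_mulA_le_range_swap_mulA

section Simple

variable {S : Type} [AddCommGroup S] [Module A S]

theorem ker_toSpanSingleton_domRestrict_le_range_mulA {s : S} (hs : s ≠ 0) (h1 : D.e1 • s = s)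
    (ha : D.a • s = 0) :
    LinearMap.ker ((LinearMap.toSpanSingleton A S s).domRestrict (P1 D)) ≤
      LinearMap.range D.mulA := by
  intro x hx
  obtain ⟨c, d, hcd⟩ := D.exists_eq_smul_e1_add_smul_a x.2
  have hcs : algebraMap k A c • s = 0 := by
    have hxs : (x : A) • s = 0 := hx
    rwa [hcd, add_smul, Algebra.smul_def, Algebra.smul_def, mul_smul, mul_smul, h1, ha,
      smul_zero, add_zero] at hxs
  have hc : c = 0 := by
    by_contra hc
    exact hs (((Ne.isUnit hc).map (algebraMap k A)).smul_eq_zero.mp hcs)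
  exact D.mem_range_mulA (by rw [hcd, hc, zero_smul, zero_add])

noncomputable def projectiveResolution [IsSimpleModule A S] (h1 : ∀ x : S, D.e1 • x = x)
    (ha : ∀ x : S, D.a • x = 0) {s : S} (hs : s ≠ 0) :
    ProjectiveResolution (ModuleCat.of A S) where
  complex := D.periodicComplex
  projective n := inferInstanceAs (Projective (D.projAt n.isEven))
  π := (ChainComplex.toSingle₀Equiv _ _).symm
    ⟨ModuleCat.ofHom ((LinearMap.toSpanSingleton A S s).domRestrict (P1 D)), by
      rw [periodicComplex_d]
      exact ModuleCat.hom_ext (D.comp_mulA_eq_zero ha _)⟩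
  quasiIso := ⟨fun n => by
    cases n with
    | zero =>
      rw [ChainComplex.quasiIsoAt₀_iff, ShortComplex.quasiIso_iff_of_zeros' _ rfl rfl rfl]
      refine ⟨?_, ?_⟩
      · rw [ShortComplex.moduleCat_exact_iff_ker_sub_range]
        exact D.ker_toSpanSingleton_domRestrict_le_range_mulA hs (h1 s) (ha s)
      · rw [ModuleCat.epi_iff_surjective]
        have hsurj := IsSimpleModule.surjective_toSpanSingleton_domRestrict hs (h1 s)
        exact hsurj
    | succ n =>
      rw [quasiIsoAt_iff_exactAt' _ _ (ChainComplex.exactAt_succ_single_obj _ _)]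
      exact D.periodicComplex_exactAt_succ n⟩

noncomputable def isoExt [IsSimpleModule A S] (h1 : ∀ x : S, D.e1 • x = x)
    (ha : ∀ x : S, D.a • x = 0) {s : S} (hs : s ≠ 0) (Y : ModuleCat A)
    (hYa : ∀ y : Y, D.a • y = 0) (hYb : ∀ y : Y, D.b • y = 0) (n : ℕ) :
    ((Ext k (ModuleCat A) n).obj (Opposite.op (ModuleCat.of A S))).obj Y ≅
      ModuleCat.of k (D.projAt n.isEven ⟶ Y) :=
  (D.projectiveResolution h1 ha hs).isoExtOfDCompEqZero Y
    (fun m g => (D.periodicComplex_d m).symm ▸ D.mulArrow_comp_eq_zero hYa hYb _ g) n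

theorem finrank_hom_projAt_true [IsSimpleModule A S] (h1 : ∀ x : S, D.e1 • x = x)
    (ha : ∀ x : S, D.a • x = 0) (hb : ∀ x : S, D.b • x = 0) :
    Module.finrank k (D.projAt true ⟶ ModuleCat.of A S) = 1 := by
  have := IsSimpleModule.nontrivial A S
  obtain ⟨s, hs⟩ := exists_ne (0 : S)
  exact IsIdempotentElem.finrank_hom_span_singleton_eq_one D.he1 hs (h1 s) fun t _ =>
    IsSimpleModule.exists_eq_algebraMap_smul hs
      (D.exists_smul_eq_algebraMap_smul (h1 s) (ha s) (hb s)) t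

theorem finrank_hom_projAt_false [IsSimpleModule A S] (h2 : ∀ x : S, D.e2 • x = x)
    (ha : ∀ x : S, D.a • x = 0) (hb : ∀ x : S, D.b • x = 0) :
    Module.finrank k (D.projAt false ⟶ ModuleCat.of A S) = 1 :=
  D.swap.finrank_hom_projAt_true h2 hb ha

theorem subsingleton_hom_projAt_false (h1 : ∀ x : S, D.e1 • x = x) :
    Subsingleton (D.projAt false ⟶ ModuleCat.of A S) :=
  IsIdempotentElem.subsingleton_hom_span_singleton D.he2 fun x => D.e2_smul_eq_zero (h1 x)

theorem subsingleton_hom_projAt_true (h2 : ∀ x : S, D.e2 • x = x) :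
    Subsingleton (D.projAt true ⟶ ModuleCat.of A S) :=
  D.swap.subsingleton_hom_projAt_false h2

end Simple

end PiA2Data

/-- For the preprojective algebra `ΠA₂`, with `S₁, S₂` the simple
modules at the two vertices, `Extⁿ(S₁,S₁)` is 1-dimensional over `k` for even `n`
and vanishes for odd `n`, while `Extⁿ(S₁,S₂)` is 1-dimensional for odd `n` and
vanishes for even `n`. -/
theorem piA2_ext_simples
    (S1 S2 : Type) [AddCommGroup S1] [Module A S1] [AddCommGroup S2] [Module A S2]
    (hS1 : IsSimpleModule A S1) (hS2 : IsSimpleModule A S2)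
    (hact1 : ∀ x : S1, D.e1 • x = x ∧ D.a • x = 0 ∧ D.b • x = 0)
    (hact2 : ∀ x : S2, D.e2 • x = x ∧ D.a • x = 0 ∧ D.b • x = 0)
    (n : ℕ) :
    (Even n → Module.finrank k
      (((Ext k (ModuleCat A) n).obj (Opposite.op (ModuleCat.of A S1))).obj
        (ModuleCat.of A S1)) = 1) ∧
    (Odd n → Subsingleton
      (((Ext k (ModuleCat A) n).obj (Opposite.op (ModuleCat.of A S1))).obj
        (ModuleCat.of A S1))) ∧
    (Odd n → Module.finrank k
      (((Ext k (ModuleCat A) n).obj (Opposite.op (ModuleCat.of A S1))).obj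
        (ModuleCat.of A S2)) = 1) ∧
    (Even n → Subsingleton
      (((Ext k (ModuleCat A) n).obj (Opposite.op (ModuleCat.of A S1))).obj
        (ModuleCat.of A S2))) := by
  obtain ⟨h1, ha1, hb1⟩ : (∀ x : S1, D.e1 • x = x) ∧ (∀ x : S1, D.a • x = 0) ∧
      ∀ x : S1, D.b • x = 0 := by simpa only [forall_and] using hact1
  obtain ⟨h2, ha2, hb2⟩ : (∀ x : S2, D.e2 • x = x) ∧ (∀ x : S2, D.a • x = 0) ∧
      ∀ x : S2, D.b • x = 0 := by simpa only [forall_and] using hact2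
  have := IsSimpleModule.nontrivial A S1
  obtain ⟨s, hs⟩ := exists_ne (0 : S1)
  have ext₁ := (D.isoExt h1 ha1 hs (ModuleCat.of A S1) ha1 hb1 n).toLinearEquiv
  have ext₂ := (D.isoExt h1 ha1 hs (ModuleCat.of A S2) ha2 hb2 n).toLinearEquiv
  refine ⟨fun hn => ?_, fun hn => ?_, fun hn => ?_, fun hn => ?_⟩
  · rw [ext₁.finrank_eq, (n.isEven_eq_true_iff).mpr hn]
    exact D.finrank_hom_projAt_true h1 ha1 hb1
  · rw [(n.isEven_eq_false_iff).mpr hn] at ext₁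
    have := D.subsingleton_hom_projAt_false h1
    exact ext₁.toEquiv.subsingleton
  · rw [ext₂.finrank_eq, (n.isEven_eq_false_iff).mpr hn]
    exact D.finrank_hom_projAt_false h2 ha2 hb2
  · rw [(n.isEven_eq_true_iff).mpr hn] at ext₂
    have := D.subsingleton_hom_projAt_true h2
    exact ext₂.toEquiv.subsingleton
end

section
/- Every indecomposable finite-dimensional representation of the A_2 quiver over a field k is isomorphic to exactly one of: P (with P(X)=k, P(Y)=k, P(f)=id), S_1 (with S_1(X)=k, S_1(Y)=0), or S_2 (with S_2(X)=0, S_2(Y)=k). -/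
/-!
Complements `V = C ⊕ ker f` and `W = range f ⊕ D` split the representation, since `f` maps `C`
into `range f` and `ker f` into `D`; so `f = 0` or `f` is bijective. If `f = 0` the
representation is `(V → 0) ⊕ (0 → W)`, so `V = 0` or `W = 0`. In each case a splitting of the
remaining space lifts to a splitting of the representation, hence that space is a line. The
three outcomes have different dimension vectors, so they are mutually exclusive.
-/

/-- A finite-dimensional representation of the `A₂` quiver `X →f Y` over `k`:
vector spaces `V = M(X)`, `W = M(Y)` and a linear map `f : V → W`. -/
structure RepA2 (k : Type) [Field k] : Type 1 where
  V : Type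
  W : Type
  [grpV : AddCommGroup V]
  [grpW : AddCommGroup W]
  [modV : Module k V]
  [modW : Module k W]
  f : V →ₗ[k] W

attribute [instance] RepA2.grpV RepA2.grpW RepA2.modV RepA2.modW

variable {k : Type} [Field k]

/-- Isomorphism of representations of the `A₂` quiver. -/
def RepA2.Iso (M N : RepA2 k) : Prop :=
  ∃ (eV : M.V ≃ₗ[k] N.V) (eW : M.W ≃ₗ[k] N.W), ∀ v : M.V, eW (M.f v) = N.f (eV v)

/-- A representation is indecomposable if it is nonzero and admits no nontrivial
direct sum decomposition into subrepresentations. -/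
def RepA2.Indecomposable (M : RepA2 k) : Prop :=
  (¬ (Subsingleton M.V ∧ Subsingleton M.W)) ∧
  ∀ (V1 V2 : Submodule k M.V) (W1 W2 : Submodule k M.W),
    IsCompl V1 V2 → IsCompl W1 W2 →
    Submodule.map M.f V1 ≤ W1 → Submodule.map M.f V2 ≤ W2 →
    (V1 = ⊥ ∧ W1 = ⊥) ∨ (V2 = ⊥ ∧ W2 = ⊥)

/-- The indecomposable projective representation `P : k →id k`. -/
def RepP (k : Type) [Field k] : RepA2 k := ⟨k, k, LinearMap.id⟩

/-- The simple representation `S₁ : k → 0`. -/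
def RepS1 (k : Type) [Field k] : RepA2 k := ⟨k, PUnit, 0⟩

/-- The simple representation `S₂ : 0 → k`. -/
def RepS2 (k : Type) [Field k] : RepA2 k := ⟨PUnit, k, 0⟩

open Module

theorem finrank_eq_one_of_forall_isCompl {K V : Type*} [DivisionRing K] [AddCommGroup V]
    [Module K V] [Nontrivial V]
    (h : ∀ p q : Submodule K V, IsCompl p q → p = ⊥ ∨ q = ⊥) : finrank K V = 1 := by
  have : IsSimpleModule K V :=
    { eq_bot_or_eq_top := fun p => by
        obtain ⟨q, hpq⟩ := p.exists_isCompl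
        exact (h p q hpq).imp_right fun hq => by simpa [hq] using hpq.sup_eq_top }
  exact isSimpleModule_iff_finrank_eq_one.mp this

noncomputable def LinearEquiv.ofFinrankEqOne {K V : Type*} [DivisionRing K] [AddCommGroup V]
    [Module K V] (h : finrank K V = 1) : V ≃ₗ[K] K :=
  (Module.basisUnique Unit h).equivFun ≪≫ₗ LinearEquiv.funUnique Unit K K

namespace RepA2

variable {M : RepA2 k}

noncomputable def dimVec (M : RepA2 k) : ℕ × ℕ := (finrank k M.V, finrank k M.W)

theorem Iso.dimVec_eq {N : RepA2 k} (h : M.Iso N) : M.dimVec = N.dimVec := by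
  obtain ⟨eV, eW, -⟩ := h
  simp [dimVec, eV.finrank_eq, eW.finrank_eq]

theorem Iso.not_iso_of_dimVec_ne {N N' : RepA2 k} (h : M.Iso N) (hN : N.dimVec ≠ N'.dimVec) :
    ¬ M.Iso N' :=
  fun h' => hN (h.dimVec_eq.symm.trans h'.dimVec_eq)

@[simp] theorem dimVec_repP : (RepP k).dimVec = (1, 1) :=
  Prod.ext (finrank_self k) (finrank_self k)

@[simp] theorem dimVec_repS1 : (RepS1 k).dimVec = (1, 0) :=
  Prod.ext (finrank_self k) (finrank_zero_of_subsingleton : finrank k PUnit = 0)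

@[simp] theorem dimVec_repS2 : (RepS2 k).dimVec = (0, 1) :=
  Prod.ext (finrank_zero_of_subsingleton : finrank k PUnit = 0) (finrank_self k)

theorem iso_repP (hf : Function.Bijective M.f) (hV : finrank k M.V = 1) : M.Iso (RepP k) := by
  let e := LinearEquiv.ofBijective M.f hf
  let eV := LinearEquiv.ofFinrankEqOne hV
  exact ⟨eV, e.symm ≪≫ₗ eV,
    fun v => show eV (e.symm (e v)) = eV v by rw [e.symm_apply_apply]⟩

theorem iso_repS1 [Subsingleton M.W] (hV : finrank k M.V = 1) : M.Iso (RepS1 k) :=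
  ⟨LinearEquiv.ofFinrankEqOne hV, LinearEquiv.ofSubsingleton M.W PUnit, fun _ => rfl⟩

theorem iso_repS2 [Subsingleton M.V] (hW : finrank k M.W = 1) : M.Iso (RepS2 k) :=
  ⟨LinearEquiv.ofSubsingleton M.V PUnit, LinearEquiv.ofFinrankEqOne hW,
    fun v => show LinearEquiv.ofFinrankEqOne hW (M.f v) = 0 by simp [Subsingleton.elim v 0]⟩

namespace Indecomposable

theorem f_eq_zero_or_bijective (hM : M.Indecomposable) : M.f = 0 ∨ Function.Bijective M.f := by
  obtain ⟨C, hC⟩ := (LinearMap.ker M.f).exists_isCompl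
  obtain ⟨D, hD⟩ := (LinearMap.range M.f).exists_isCompl
  have hC_le : C.map M.f ≤ LinearMap.range M.f := LinearMap.map_le_range
  have hker_le : (LinearMap.ker M.f).map M.f ≤ D := by
    rintro _ ⟨x, hx, rfl⟩
    rw [LinearMap.mem_ker.mp hx]
    exact D.zero_mem
  rcases hM.2 C _ _ D hC.symm hD hC_le hker_le with ⟨-, hrange⟩ | ⟨hker, hD_bot⟩
  · exact Or.inl (LinearMap.range_eq_bot.mp hrange)
  · refine Or.inr ⟨LinearMap.ker_eq_bot.mp hker, LinearMap.range_eq_top.mp ?_⟩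
    simpa [hD_bot] using hD.sup_eq_top

theorem subsingleton_or_subsingleton_of_f_eq_zero (hM : M.Indecomposable) (hf : M.f = 0) :
    Subsingleton M.V ∨ Subsingleton M.W := by
  rcases hM.2 ⊤ ⊥ ⊥ ⊤ isCompl_top_bot isCompl_bot_top (by simp [hf]) (by simp) with
    ⟨hV, -⟩ | ⟨-, hW⟩
  · exact Or.inl ((Submodule.subsingleton_iff k).mp (subsingleton_of_bot_eq_top hV.symm))
  · exact Or.inr ((Submodule.subsingleton_iff k).mp (subsingleton_of_bot_eq_top hW.symm))

theorem finrank_V_eq_one_of_subsingleton_W (hM : M.Indecomposable) [Subsingleton M.W] :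
    finrank k M.V = 1 := by
  have : Nontrivial M.V := not_subsingleton_iff_nontrivial.mp fun h => hM.1 ⟨h, ‹_›⟩
  refine finrank_eq_one_of_forall_isCompl fun p q hpq => ?_
  rcases hM.2 p q ⊥ ⊤ hpq isCompl_bot_top (by simp) (by simp) with ⟨hp, -⟩ | ⟨hq, -⟩
  exacts [Or.inl hp, Or.inr hq]

theorem finrank_W_eq_one_of_subsingleton_V (hM : M.Indecomposable) [Subsingleton M.V] :
    finrank k M.W = 1 := by
  have : Nontrivial M.W := not_subsingleton_iff_nontrivial.mp fun h => hM.1 ⟨‹_›, h⟩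
  refine finrank_eq_one_of_forall_isCompl fun p q hpq => ?_
  rcases hM.2 ⊥ ⊤ p q isCompl_bot_top hpq (by simp) (by simp [Subsingleton.elim M.f 0]) with
    ⟨-, hp⟩ | ⟨-, hq⟩
  exacts [Or.inl hp, Or.inr hq]

theorem finrank_V_eq_one_of_bijective (hM : M.Indecomposable) (hf : Function.Bijective M.f) :
    finrank k M.V = 1 := by
  let e := LinearEquiv.ofBijective M.f hf
  have : Nontrivial M.V := not_subsingleton_iff_nontrivial.mp fun h =>
    hM.1 ⟨h, e.symm.toEquiv.subsingleton⟩
  refine finrank_eq_one_of_forall_isCompl fun p q hpq => ?_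
  have hmap : IsCompl (p.map M.f) (q.map M.f) := (Submodule.orderIsoMapComap e).isCompl hpq
  rcases hM.2 p q _ _ hpq hmap le_rfl le_rfl with ⟨hp, -⟩ | ⟨hq, -⟩
  exacts [Or.inl hp, Or.inr hq]

end Indecomposable

end RepA2

theorem a2_indecomposable_classification_general
    (M : RepA2 k)
    (hM : M.Indecomposable) :
    (M.Iso (RepP k) ∧ ¬ M.Iso (RepS1 k) ∧ ¬ M.Iso (RepS2 k)) ∨
    (¬ M.Iso (RepP k) ∧ M.Iso (RepS1 k) ∧ ¬ M.Iso (RepS2 k)) ∨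
    (¬ M.Iso (RepP k) ∧ ¬ M.Iso (RepS1 k) ∧ M.Iso (RepS2 k)) := by
  rcases hM.f_eq_zero_or_bijective with hf | hf
  · rcases hM.subsingleton_or_subsingleton_of_f_eq_zero hf with hV | hW
    · have h := RepA2.iso_repS2 hM.finrank_W_eq_one_of_subsingleton_V
      exact Or.inr <| Or.inr
        ⟨h.not_iso_of_dimVec_ne (by simp), h.not_iso_of_dimVec_ne (by simp), h⟩
    · have h := RepA2.iso_repS1 hM.finrank_V_eq_one_of_subsingleton_W
      exact Or.inr <| Or.inl
        ⟨h.not_iso_of_dimVec_ne (by simp), h, h.not_iso_of_dimVec_ne (by simp)⟩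
  · have h := RepA2.iso_repP hf (hM.finrank_V_eq_one_of_bijective hf)
    exact Or.inl ⟨h, h.not_iso_of_dimVec_ne (by simp), h.not_iso_of_dimVec_ne (by simp)⟩

/-- Every indecomposable finite-dimensional representation of the
`A₂` quiver over a field `k` is isomorphic to exactly one of `P`, `S₁`, `S₂`. -/
theorem a2_indecomposable_classification
    (M : RepA2 k) [FiniteDimensional k M.V] [FiniteDimensional k M.W]
    (hM : M.Indecomposable) :
    (M.Iso (RepP k) ∧ ¬ M.Iso (RepS1 k) ∧ ¬ M.Iso (RepS2 k)) ∨
    (¬ M.Iso (RepP k) ∧ M.Iso (RepS1 k) ∧ ¬ M.Iso (RepS2 k)) ∨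
    (¬ M.Iso (RepP k) ∧ ¬ M.Iso (RepS1 k) ∧ M.Iso (RepS2 k)) :=
  a2_indecomposable_classification_general M hM
end
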